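/- arXiv:1503.07118 — 2 statements merged into one kernel-verified Lean document; each statement's English description precedes it below -/
import Mathlib

section
/- Let P and Q be probability measures on a measurable space (A, F) with P absolutely continuous with respect to Q, and suppose there are constants β₁ ∈ (0,1] and β₂ ∈ [0,1] such that β₂ ≤ dP/dQ(a) ≤ 1/β₁ for Q-almost every a. Then the Rényi divergence of order 2 (in nats), D₂(P‖Q) = ln(1 + χ²(P,Q)), satisfies D₂(P‖Q) ≤ ln(1 + max{ 1/β₁ − 1, 1 − β₂ }·|P−Q|); in particular the relative entropy satisfies D(P‖Q) ≤ ln(1 + max{ 1/β₁ − 1, 1 − β₂ }·|P−Q|). -/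
/-!
With `f = dP/dQ`, the density bounds give `|f - 1| ≤ M := max (1/β₁ - 1) (1 - β₂)` `Q`-a.e.,
so `χ²(P,Q) = ∫ (f - 1)² dQ ≤ M ∫ |f - 1| dQ`. Splitting the last integral along `E = {f > 1}`
writes it as `(P - Q)(E) - (P - Q)(Eᶜ) ≤ |P - Q|`. For the relative entropy, Jensen's
inequality for the concave `log` gives
`D(P‖Q) = ∫ log f dP ≤ log ∫ f dP = log ∫ f² dQ = log (1 + χ²(P,Q))`.
-/

open MeasureTheory

/-- Chi-squared divergence: `χ²(P,Q) = ∫ (dP/dQ − 1)² dQ`. -/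
noncomputable def chiSqDiv {A : Type*} [MeasurableSpace A] (P Q : Measure A) : ℝ :=
  ∫ a, ((P.rnDeriv Q a).toReal - 1) ^ 2 ∂Q

/-- Relative entropy (in nats): `D(P‖Q) = ∫ ln(dP/dQ) dP`. -/
noncomputable def relEntropyNats {A : Type*} [MeasurableSpace A] (P Q : Measure A) : ℝ :=
  ∫ a, Real.log ((P.rnDeriv Q a).toReal) ∂P

/-- Total variation distance: `|P−Q| = 2 ⨆_{E measurable} |P(E) − Q(E)|`. -/
noncomputable def tvDist {A : Type*} [MeasurableSpace A] (P Q : Measure A) : ℝ :=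
  2 * ⨆ E : {E : Set A // MeasurableSet E}, |(P E.1).toReal - (Q E.1).toReal|

open Real

section

variable {α : Type*} [MeasurableSpace α]

theorem integral_log_le_log_integral {μ : Measure α} [IsProbabilityMeasure μ] {g : α → ℝ}
    (hg_pos : ∀ᵐ a ∂μ, 0 < g a) (hg : Integrable g μ)
    (hlog : Integrable (fun a => log (g a)) μ) :
    ∫ a, log (g a) ∂μ ≤ log (∫ a, g a ∂μ) := by
  set c := ∫ a, g a ∂μ
  have hc : 0 < c := by
    refine (integral_pos_iff_support_of_nonneg_ae (hg_pos.mono fun a ha => ha.le) hg).2 ?_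
    refine pos_iff_ne_zero.2 fun h => ?_
    obtain ⟨a, ha, hpos⟩ := ((measure_eq_zero_iff_ae_notMem.1 h).and hg_pos).exists
    exact ha hpos.ne'
  have htangent : ∀ᵐ a ∂μ, log (g a) ≤ log c + (g a / c - 1) := by
    filter_upwards [hg_pos] with a ha
    have h := log_le_sub_one_of_pos (div_pos ha hc)
    rw [log_div ha.ne' hc.ne'] at h
    linarith
  have hdev : Integrable (fun a => g a / c - 1) μ := (hg.div_const c).sub (integrable_const 1)
  have hmean : ∫ a, (g a / c - 1) ∂μ = 0 := by
    rw [integral_sub (hg.div_const c) (integrable_const 1), integral_div, integral_const]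
    exact sub_eq_zero.2 (by simp only [probReal_univ, one_smul]; exact div_self hc.ne')
  calc ∫ a, log (g a) ∂μ ≤ ∫ a, (log c + (g a / c - 1)) ∂μ :=
        integral_mono_ae hlog ((integrable_const _).add hdev) htangent
    _ = log c := by simp [integral_add (integrable_const _) hdev, hmean]

variable {P Q : Measure α}

theorem chiSqDiv_nonneg : 0 ≤ chiSqDiv P Q :=
  integral_nonneg fun _ => sq_nonneg _

theorem setIntegral_toReal_rnDeriv_sub_one [IsFiniteMeasure P] [IsFiniteMeasure Q] (hPQ : P ≪ Q)
    (s : Set α) :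
    ∫ a in s, ((P.rnDeriv Q a).toReal - 1) ∂Q = (P s).toReal - (Q s).toReal := by
  rw [integral_sub Measure.integrable_toReal_rnDeriv.restrict (integrable_const 1),
    Measure.setIntegral_toReal_rnDeriv hPQ]
  simp [Measure.real]

theorem abs_sub_le_half_tvDist [IsFiniteMeasure P] [IsFiniteMeasure Q] (s : Set α)
    (hs : MeasurableSet s) : |(P s).toReal - (Q s).toReal| ≤ tvDist P Q / 2 := by
  have hbdd : BddAbove (Set.range fun E : {E : Set α // MeasurableSet E} =>
      |(P E.1).toReal - (Q E.1).toReal|) := by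
    refine ⟨(P Set.univ).toReal + (Q Set.univ).toReal, ?_⟩
    rintro x ⟨E, rfl⟩
    have hP : (P E.1).toReal ≤ (P Set.univ).toReal := measureReal_mono (Set.subset_univ _)
    have hQ : (Q E.1).toReal ≤ (Q Set.univ).toReal := measureReal_mono (Set.subset_univ _)
    rw [abs_le]
    constructor <;>
      linarith [ENNReal.toReal_nonneg (a := P E.1), ENNReal.toReal_nonneg (a := Q E.1)]
  have := le_ciSup hbdd ⟨s, hs⟩
  unfold tvDist
  linarith

theorem integral_abs_toReal_rnDeriv_sub_one_le_tvDist [IsFiniteMeasure P] [IsFiniteMeasure Q]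
    (hPQ : P ≪ Q) : ∫ a, |(P.rnDeriv Q a).toReal - 1| ∂Q ≤ tvDist P Q := by
  set f : α → ℝ := fun a => (P.rnDeriv Q a).toReal
  set E : Set α := {a | 1 < f a}
  have hE : MeasurableSet E :=
    measurableSet_lt measurable_const (Measure.measurable_rnDeriv P Q).ennreal_toReal
  have hint : Integrable (fun a => |f a - 1|) Q :=
    (Measure.integrable_toReal_rnDeriv.sub (integrable_const 1)).abs
  have hon : ∫ a in E, |f a - 1| ∂Q = (P E).toReal - (Q E).toReal := by
    rw [← setIntegral_toReal_rnDeriv_sub_one hPQ]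
    exact setIntegral_congr_fun hE fun a ha => abs_of_pos (sub_pos.2 ha)
  have hoff : ∫ a in Eᶜ, |f a - 1| ∂Q = -((P Eᶜ).toReal - (Q Eᶜ).toReal) := by
    rw [← setIntegral_toReal_rnDeriv_sub_one hPQ, ← integral_neg]
    exact setIntegral_congr_fun hE.compl fun a ha => abs_of_nonpos (sub_nonpos.2 (not_lt.1 ha))
  rw [← integral_add_compl hE hint, hon, hoff]
  linarith [le_abs_self ((P E).toReal - (Q E).toReal),
    neg_le_abs ((P Eᶜ).toReal - (Q Eᶜ).toReal),
    abs_sub_le_half_tvDist (P := P) (Q := Q) E hE,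
    abs_sub_le_half_tvDist (P := P) (Q := Q) Eᶜ hE.compl]

theorem chiSqDiv_le_mul_integral_abs [IsFiniteMeasure P] [IsFiniteMeasure Q] {M : ℝ}
    (hM : ∀ᵐ a ∂Q, |(P.rnDeriv Q a).toReal - 1| ≤ M) :
    chiSqDiv P Q ≤ M * ∫ a, |(P.rnDeriv Q a).toReal - 1| ∂Q := by
  have hint : Integrable (fun a => |(P.rnDeriv Q a).toReal - 1|) Q :=
    (Measure.integrable_toReal_rnDeriv.sub (integrable_const 1)).abs
  have hsq_le :
      ∀ᵐ a ∂Q, ((P.rnDeriv Q a).toReal - 1) ^ 2 ≤ M * |(P.rnDeriv Q a).toReal - 1| := by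
    filter_upwards [hM] with a ha
    rw [← sq_abs, sq]
    exact mul_le_mul_of_nonneg_right ha (abs_nonneg _)
  have hsq : Integrable (fun a => ((P.rnDeriv Q a).toReal - 1) ^ 2) Q := by
    refine (hint.const_mul M).mono' ?_ ?_
    · exact (((Measure.measurable_rnDeriv P Q).ennreal_toReal.sub_const 1).pow_const
        2).aestronglyMeasurable
    · filter_upwards [hsq_le] with a ha
      rwa [norm_of_nonneg (sq_nonneg _)]
  rw [← integral_const_mul]
  exact integral_mono_ae hsq (hint.const_mul M) hsq_le

theorem chiSqDiv_le_mul_tvDist [IsFiniteMeasure P] [IsFiniteMeasure Q] [NeZero Q] (hPQ : P ≪ Q)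
    {M : ℝ} (hM : ∀ᵐ a ∂Q, |(P.rnDeriv Q a).toReal - 1| ≤ M) :
    chiSqDiv P Q ≤ M * tvDist P Q := by
  obtain ⟨a, ha⟩ := hM.exists
  exact (chiSqDiv_le_mul_integral_abs hM).trans <| mul_le_mul_of_nonneg_left
    (integral_abs_toReal_rnDeriv_sub_one_le_tvDist hPQ) ((abs_nonneg _).trans ha)

theorem integral_toReal_rnDeriv_eq_one_add_chiSqDiv
    [IsProbabilityMeasure P] [IsProbabilityMeasure Q] (hPQ : P ≪ Q)
    (hf : Integrable (fun a => (P.rnDeriv Q a).toReal) P) :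
    ∫ a, (P.rnDeriv Q a).toReal ∂P = 1 + chiSqDiv P Q := by
  set f : α → ℝ := fun a => (P.rnDeriv Q a).toReal
  have hfQ : Integrable f Q := Measure.integrable_toReal_rnDeriv
  have hf_sq : Integrable (fun a => f a * f a) Q := (integrable_rnDeriv_smul_iff hPQ).2 hf
  have hf_mean : ∫ a, f a ∂Q = 1 := by simp [f, Measure.integral_toReal_rnDeriv hPQ]
  have hf_lin : Integrable (fun a => 2 * f a - 1) Q := (hfQ.const_mul 2).sub (integrable_const 1)
  have hchi : chiSqDiv P Q = ∫ a, (f a * f a - (2 * f a - 1)) ∂Q :=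
    integral_congr_ae (ae_of_all _ fun a => by ring)
  have hP : ∫ a, f a ∂P = ∫ a, f a * f a ∂Q := (integral_rnDeriv_smul hPQ).symm
  rw [hP, hchi, integral_sub hf_sq hf_lin, integral_sub (hfQ.const_mul 2) (integrable_const 1),
    integral_const_mul, hf_mean]
  simp only [integral_const, probReal_univ, smul_eq_mul]
  ring

theorem relEntropyNats_le_log_one_add_chiSqDiv
    [IsProbabilityMeasure P] [IsProbabilityMeasure Q] (hPQ : P ≪ Q)
    (hf : Integrable (fun a => (P.rnDeriv Q a).toReal) P) :
    relEntropyNats P Q ≤ log (1 + chiSqDiv P Q) := by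
  by_cases hlog : Integrable (fun a => log (P.rnDeriv Q a).toReal) P
  · have hpos : ∀ᵐ a ∂P, 0 < (P.rnDeriv Q a).toReal := by
      filter_upwards [Measure.rnDeriv_pos hPQ, hPQ.ae_le (Measure.rnDeriv_lt_top P Q)]
        with a h0 htop
      exact ENNReal.toReal_pos h0.ne' htop.ne
    rw [← integral_toReal_rnDeriv_eq_one_add_chiSqDiv hPQ hf]
    exact integral_log_le_log_integral hpos hf hlog
  · rw [relEntropyNats, integral_undef hlog]
    exact log_nonneg (le_add_of_nonneg_right chiSqDiv_nonneg)

end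

theorem renyi2_and_relEntropy_le_tv_general_general {A : Type*} [MeasurableSpace A]
    (P Q : Measure A) [IsProbabilityMeasure P] [IsProbabilityMeasure Q]
    (hPQ : P ≪ Q) (β₁ β₂ : ℝ)
    (hbound : ∀ᵐ a ∂Q, β₂ ≤ ((P.rnDeriv Q) a).toReal ∧ ((P.rnDeriv Q) a).toReal ≤ 1 / β₁) :
    Real.log (1 + chiSqDiv P Q) ≤
        Real.log (1 + max (1 / β₁ - 1) (1 - β₂) * tvDist P Q) ∧
      relEntropyNats P Q ≤
        Real.log (1 + max (1 / β₁ - 1) (1 - β₂) * tvDist P Q) := by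
  have hM : ∀ᵐ a ∂Q, |(P.rnDeriv Q a).toReal - 1| ≤ max (1 / β₁ - 1) (1 - β₂) := by
    filter_upwards [hbound] with a ⟨hlow, hhigh⟩
    exact abs_sub_le_iff.2 ⟨by linarith [le_max_left (1 / β₁ - 1) (1 - β₂)],
      by linarith [le_max_right (1 / β₁ - 1) (1 - β₂)]⟩
  have hf : Integrable (fun a => (P.rnDeriv Q a).toReal) P := by
    refine .of_bound (Measure.measurable_rnDeriv P Q).ennreal_toReal.aestronglyMeasurable
      (1 / β₁) ?_
    filter_upwards [hPQ.ae_le hbound] with a ha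
    rw [norm_of_nonneg ENNReal.toReal_nonneg]
    exact ha.2
  have hchi : log (1 + chiSqDiv P Q) ≤ log (1 + max (1 / β₁ - 1) (1 - β₂) * tvDist P Q) :=
    log_le_log (by linarith [chiSqDiv_nonneg (P := P) (Q := Q)])
      (by linarith [chiSqDiv_le_mul_tvDist hPQ hM])
  exact ⟨hchi, (relEntropyNats_le_log_one_add_chiSqDiv hPQ hf).trans hchi⟩

theorem renyi2_and_relEntropy_le_tv_general {A : Type*} [MeasurableSpace A]
    (P Q : Measure A) [IsProbabilityMeasure P] [IsProbabilityMeasure Q]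
    (hPQ : P ≪ Q) (β₁ β₂ : ℝ) (hβ₁ : β₁ ∈ Set.Ioc (0 : ℝ) 1) (hβ₂ : β₂ ∈ Set.Icc (0 : ℝ) 1)
    (hbound : ∀ᵐ a ∂Q, β₂ ≤ ((P.rnDeriv Q) a).toReal ∧ ((P.rnDeriv Q) a).toReal ≤ 1 / β₁) :
    Real.log (1 + chiSqDiv P Q) ≤
        Real.log (1 + max (1 / β₁ - 1) (1 - β₂) * tvDist P Q) ∧
      relEntropyNats P Q ≤
        Real.log (1 + max (1 / β₁ - 1) (1 - β₂) * tvDist P Q) :=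
  renyi2_and_relEntropy_le_tv_general_general P Q hPQ β₁ β₂ hbound
end

section
/- Let A be a finite nonempty set, let U be the uniform (equiprobable) distribution on A, and let P be any probability mass function on A. Then the total variation distance satisfies |P−U| ≥ √( 2·( exp(−H(P)) − 1/|A| ) ), where H(P) = −Σ_{a ∈ A} P(a)·ln P(a) is the Shannon entropy of P in nats and |P−U| = Σ_{a ∈ A} |P(a) − 1/|A||. -/
/-!
By Jensen's inequality for the weights `P a` (the weighted AM–GM inequality),
`exp (-H(P)) = ∏ P a ^ P a ≤ ∑ P a ^ 2 = 1/|A| + ∑ (P a - 1/|A|) ^ 2`.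
The deviations `x a = P a - 1/|A|` sum to zero, so each `|x a|` is at most half of
`∑ |x b|`, whence `∑ x a ^ 2 ≤ (∑ |x b|) ^ 2 / 2`.
-/

open Finset Real

lemma Real.rpow_self_eq_exp_mul_log {x : ℝ} (hx : 0 ≤ x) : x ^ x = exp (x * log x) := by
  rcases hx.eq_or_lt with rfl | hx
  · simp
  · rw [rpow_def_of_pos hx, mul_comm]

lemma exp_sum_mul_log_le_sum_sq {ι : Type*} (s : Finset ι) (p : ι → ℝ)
    (hp : ∀ i ∈ s, 0 ≤ p i) (hsum : ∑ i ∈ s, p i = 1) :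
    exp (∑ i ∈ s, p i * log (p i)) ≤ ∑ i ∈ s, p i ^ 2 := by
  calc exp (∑ i ∈ s, p i * log (p i))
      = ∏ i ∈ s, p i ^ p i := by
        rw [exp_sum]
        exact prod_congr rfl fun i hi => (rpow_self_eq_exp_mul_log (hp i hi)).symm
    _ ≤ ∑ i ∈ s, p i * p i := geom_mean_le_arith_mean_weighted s p p hp hsum hp
    _ = ∑ i ∈ s, p i ^ 2 := by simp only [sq]

lemma sum_sq_sub_inv_card {ι : Type*} [Fintype ι] [Nonempty ι] (p : ι → ℝ)
    (hsum : ∑ i, p i = 1) :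
    ∑ i, (p i - 1 / (Fintype.card ι : ℝ)) ^ 2 = ∑ i, p i ^ 2 - 1 / (Fintype.card ι : ℝ) := by
  have hcard : (Fintype.card ι : ℝ) ≠ 0 := by positivity
  simp only [sub_sq, sum_add_distrib, sum_sub_distrib, ← sum_mul, ← mul_sum, hsum, sum_const,
    card_univ, nsmul_eq_mul]
  field_simp
  ring

lemma two_mul_abs_le_sum_abs_of_sum_eq_zero {ι : Type*} [DecidableEq ι] {s : Finset ι}
    {x : ι → ℝ} (hx : ∑ i ∈ s, x i = 0) {a : ι} (ha : a ∈ s) :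
    2 * |x a| ≤ ∑ i ∈ s, |x i| := by
  rw [← add_sum_erase s _ ha] at hx ⊢
  have hrest : |x a| ≤ ∑ i ∈ s.erase a, |x i| := by
    rw [eq_neg_of_add_eq_zero_left hx, abs_neg]
    exact abs_sum_le_sum_abs _ _
  linarith

lemma two_mul_sum_sq_le_sq_sum_abs_of_sum_eq_zero {ι : Type*} {s : Finset ι} {x : ι → ℝ}
    (hx : ∑ i ∈ s, x i = 0) :
    2 * ∑ i ∈ s, x i ^ 2 ≤ (∑ i ∈ s, |x i|) ^ 2 := by
  classical
  calc 2 * ∑ i ∈ s, x i ^ 2 = ∑ i ∈ s, 2 * |x i| * |x i| := by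
        rw [mul_sum]
        exact sum_congr rfl fun i _ => by rw [mul_assoc, abs_mul_abs_self, sq]
    _ ≤ ∑ i ∈ s, (∑ j ∈ s, |x j|) * |x i| :=
        sum_le_sum fun i hi =>
          mul_le_mul_of_nonneg_right (two_mul_abs_le_sum_abs_of_sum_eq_zero hx hi) (abs_nonneg _)
    _ = (∑ i ∈ s, |x i|) ^ 2 := by rw [← mul_sum, sq]

theorem tv_from_uniform_lower_bound {A : Type*} [Fintype A] [Nonempty A]
    (P : A → ℝ) (hP : ∀ a, 0 ≤ P a) (hPsum : ∑ a, P a = 1) :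
    ∑ a, |P a - 1 / (Fintype.card A : ℝ)| ≥
      Real.sqrt (2 * (Real.exp (-(-∑ a, P a * Real.log (P a))) -
        1 / (Fintype.card A : ℝ))) := by
  set u : ℝ := 1 / (Fintype.card A : ℝ)
  have hjensen := exp_sum_mul_log_le_sum_sq univ P (fun a _ => hP a) hPsum
  have hvariance : ∑ a, (P a - u) ^ 2 = ∑ a, P a ^ 2 - u := sum_sq_sub_inv_card P hPsum
  have hdev_sum : ∑ a, (P a - u) = 0 := by
    rw [sum_sub_distrib, hPsum, sum_const, card_univ, nsmul_eq_mul,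
      mul_one_div_cancel (by positivity), sub_self]
  have hsq := two_mul_sum_sq_le_sq_sum_abs_of_sum_eq_zero hdev_sum
  rw [neg_neg, ge_iff_le, sqrt_le_iff]
  exact ⟨sum_nonneg fun a _ => abs_nonneg _, by linarith⟩
end
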